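/- arXiv:2506.19809 — 3 statements merged into one kernel-verified Lean document; each statement's English description precedes it below -/
import Mathlib

section
/- Let Ω be a Hermitian operator on a finite-dimensional Hilbert space H with 0 ≤ Ω ≤ 1, and let |Ψ⟩ be a unit vector with Ω|Ψ⟩ = |Ψ⟩. Let β(Ω) denote the second largest eigenvalue of Ω (equivalently, the operator norm of Ω − |Ψ⟩⟨Ψ|). Then for every density operator ρ on H with ⟨Ψ|ρ|Ψ⟩ ≤ 1 − ε (0 ≤ ε ≤ 1), we have tr(Ωρ) ≤ 1 − (1 − β(Ω))ε. -/
/-!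
Write `P = |Ψ⟩⟨Ψ|`, `Q = 1 - P` and `β = ‖Ω - P‖`. Since `ΩΨ = Ψ`, the self-adjoint operator
`Ω - P` satisfies `(Ω - P) Q = Ω - P`, so `Ω - P = Q (Ω - P) Q ≤ Q (β • 1) Q = β Q`. Thus
`Ω ≤ P + β Q`, and pairing with `ρ` gives `tr(Ωρ) ≤ F + β (1 - F) = 1 - (1 - β)(1 - F)` with
`F = ⟨Ψ|ρ|Ψ⟩ ≤ 1 - ε`. When `β > 1` the trivial bound `tr(Ωρ) ≤ 1`, from `Ω ≤ 1`, suffices.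
-/

open scoped Matrix.Norms.L2Operator ComplexOrder
open Matrix

lemma IsSelfAdjoint.le_norm_smul_of_mul_eq_self {A : Type*} [CStarAlgebra A] [PartialOrder A]
    [StarOrderedRing A] {a q : A} (ha : IsSelfAdjoint a) (hq : IsStarProjection q)
    (haq : a * q = a) : a ≤ ‖a‖ • q := by
  have hqa : q * a = a := by
    simpa [ha.star_eq, hq.isSelfAdjoint.star_eq] using congrArg star haq
  calc a = q * a * q := by rw [hqa, haq]
    _ ≤ q * algebraMap ℝ A ‖a‖ * q :=
        hq.isSelfAdjoint.conjugate_le_conjugate ha.le_algebraMap_norm_self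
    _ = ‖a‖ • q := by
        rw [Algebra.algebraMap_eq_smul_one, mul_smul_one, smul_mul_assoc,
          hq.isIdempotentElem.eq]

namespace Matrix

open scoped MatrixOrder

section

variable {n 𝕜 : Type*} [Fintype n] [RCLike 𝕜]

lemma trace_vecMulVec_mul {R : Type*} [CommSemiring R] (u v : n → R) (M : Matrix n n R) :
    (vecMulVec u v * M).trace = v ⬝ᵥ M *ᵥ u := by
  rw [vecMulVec_mul, trace_vecMulVec, dotProduct_comm, dotProduct_mulVec]

lemma isStarProjection_vecMulVec_self_star {Ψ : n → 𝕜} (hΨ : star Ψ ⬝ᵥ Ψ = 1) :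
    IsStarProjection (vecMulVec Ψ (star Ψ)) where
  isIdempotentElem := by rw [IsIdempotentElem, vecMulVec_mul_vecMulVec, hΨ, one_smul]
  isSelfAdjoint := (posSemidef_vecMulVec_self_star Ψ).isHermitian

lemma trace_mul_le_trace_mul [DecidableEq n] {X Y ρ : Matrix n n 𝕜} (hXY : X ≤ Y)
    (hρ : 0 ≤ ρ) : (X * ρ).trace ≤ (Y * ρ).trace := by
  obtain ⟨C, rfl⟩ := CStarAlgebra.nonneg_iff_eq_star_mul_self.mp hρ
  have hcycle (Z : Matrix n n 𝕜) : (Z * (star C * C)).trace = (C * Z * star C).trace := by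
    rw [← Matrix.mul_assoc, trace_mul_comm, Matrix.mul_assoc]
  have hconj : C * X * star C ≤ C * Y * star C := star_right_conjugate_le_conjugate hXY C
  simpa [hcycle, trace_sub] using (le_iff.mp hconj).trace_nonneg

end

lemma le_vecMulVec_add_norm_smul_one_sub {n : Type*} [Fintype n] [DecidableEq n]
    {Ω : Matrix n n ℂ} {Ψ : n → ℂ} (hΩ : Ω.IsHermitian) (hΨ : star Ψ ⬝ᵥ Ψ = 1)
    (hfix : Ω *ᵥ Ψ = Ψ) :
    Ω ≤ vecMulVec Ψ (star Ψ) + ‖Ω - vecMulVec Ψ (star Ψ)‖ • (1 - vecMulVec Ψ (star Ψ)) := by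
  set P := vecMulVec Ψ (star Ψ)
  have hP : IsStarProjection P := isStarProjection_vecMulVec_self_star hΨ
  have hΩP : Ω * P = P := by rw [mul_vecMulVec, hfix]
  have hA : (Ω - P) * (1 - P) = Ω - P := by
    rw [mul_sub, mul_one, sub_mul, hΩP, hP.isIdempotentElem.eq, sub_self, sub_zero]
  have := IsSelfAdjoint.le_norm_smul_of_mul_eq_self (hΩ.sub hP.isSelfAdjoint) hP.one_sub hA
  simpa using add_le_add_right this P

end Matrix

theorem stmt0_general {N : ℕ} (Ω ρ : Matrix (Fin N) (Fin N) ℂ) (Ψ : Fin N → ℂ) (ε : ℝ)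
    (hΩherm : Ω.IsHermitian) (hΩle : (1 - Ω).PosSemidef)
    (hΨunit : dotProduct (star Ψ) Ψ = 1)
    (hfix : Ω.mulVec Ψ = Ψ)
    (hρpos : ρ.PosSemidef) (hρtr : ρ.trace = 1)
    (hε0 : 0 ≤ ε)
    (hfid : (dotProduct (star Ψ) (ρ.mulVec Ψ)).re ≤ 1 - ε) :
    ((Ω * ρ).trace).re ≤ 1 - (1 - ‖Ω - Matrix.vecMulVec Ψ (star Ψ)‖) * ε := by
  open scoped MatrixOrder in
  have hupper := Complex.re_le_re <| trace_mul_le_trace_mul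
    (le_vecMulVec_add_norm_smul_one_sub hΩherm hΨunit hfix) hρpos.nonneg
  have hle_one := Complex.re_le_re <| trace_mul_le_trace_mul
    (sub_nonneg.mp hΩle.nonneg) hρpos.nonneg
  simp only [add_mul, smul_mul_assoc, sub_mul, one_mul, trace_add, trace_vecMulVec_mul,
    trace_smul, trace_sub, hρtr, Complex.real_smul, Complex.add_re, Complex.mul_re,
    Complex.ofReal_re, Complex.sub_re, Complex.one_re, Complex.ofReal_im, Complex.sub_im,
    Complex.one_im, zero_sub, mul_neg, zero_mul, neg_zero, sub_zero] at hupper hle_one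
  set β := ‖Ω - vecMulVec Ψ (star Ψ)‖
  set F := (star Ψ ⬝ᵥ ρ *ᵥ Ψ).re
  rcases le_or_gt β 1 with hβ | hβ
  · nlinarith [mul_le_mul_of_nonneg_left hfid (sub_nonneg.mpr hβ)]
  · nlinarith

/-- If `Ω` is a Hermitian operator with `0 ≤ Ω ≤ 1` fixing the unit vector `Ψ`, and
`β = ‖Ω − |Ψ⟩⟨Ψ|‖` is its second largest eigenvalue, then every density operator `ρ`
with `⟨Ψ|ρ|Ψ⟩ ≤ 1 − ε` satisfies `tr(Ωρ) ≤ 1 − (1 − β)ε`. -/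
theorem stmt0 {N : ℕ} (Ω ρ : Matrix (Fin N) (Fin N) ℂ) (Ψ : Fin N → ℂ) (ε : ℝ)
    (hΩherm : Ω.IsHermitian) (hΩpos : Ω.PosSemidef) (hΩle : (1 - Ω).PosSemidef)
    (hΨunit : dotProduct (star Ψ) Ψ = 1)
    (hfix : Ω.mulVec Ψ = Ψ)
    (hρpos : ρ.PosSemidef) (hρtr : ρ.trace = 1)
    (hε0 : 0 ≤ ε) (hε1 : ε ≤ 1)
    (hfid : (dotProduct (star Ψ) (ρ.mulVec Ψ)).re ≤ 1 - ε) :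
    ((Ω * ρ).trace).re ≤ 1 - (1 - ‖Ω - Matrix.vecMulVec Ψ (star Ψ)‖) * ε :=
  stmt0_general Ω ρ Ψ ε hΩherm hΩle hΨunit hfix hρpos hρtr hε0 hfid
end

section
/- With the same setup, the bound is tight: there exists a density operator ρ with ⟨Ψ|ρ|Ψ⟩ = 1 − ε achieving tr(Ωρ) = 1 − (1 − β(Ω))ε, provided β(Ω) is attained by an eigenvector orthogonal to |Ψ⟩. Hence max_{⟨Ψ|ρ|Ψ⟩ ≤ 1−ε} tr(Ωρ) = 1 − ν(Ω)ε. -/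
open scoped Matrix.Norms.L2Operator ComplexOrder
open Matrix

/-! The extremal state is `ρ = (1 - ε) |Ψ⟩⟨Ψ| + ε |u⟩⟨u|`, where `u` is the given eigenvector
for `β = ‖Ω - |Ψ⟩⟨Ψ|‖`, normalised. As `Ψ` and `u` are orthonormal eigenvectors of `Ω`
(for `1` and `β`), `⟨Ψ|ρ|Ψ⟩ = 1 - ε` and `tr(Ωρ) = (1 - ε) + εβ`. -/

namespace Matrix

variable {𝕜 : Type*} [RCLike 𝕜] {n : Type*} [Fintype n]

lemma exists_smul_dotProduct_star_self_eq_one {v : n → 𝕜} (hv : v ≠ 0) :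
    ∃ s : 𝕜, star (s • v) ⬝ᵥ (s • v) = 1 := by
  obtain ⟨c, hc, hcv⟩ := RCLike.pos_iff_exists_ofReal.mp (dotProduct_star_self_pos_iff.mpr hv)
  refine ⟨((Real.sqrt c)⁻¹ : ℝ), ?_⟩
  rw [star_smul, smul_dotProduct, dotProduct_smul, ← hcv, RCLike.star_def, RCLike.conj_ofReal,
    smul_eq_mul, smul_eq_mul, ← RCLike.ofReal_mul, ← RCLike.ofReal_mul, ← mul_assoc, ← mul_inv,
    Real.mul_self_sqrt hc.le, inv_mul_cancel₀ hc.ne', RCLike.ofReal_one]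

lemma trace_vecMulVec_star_of_dotProduct_star_self_eq_one {w : n → 𝕜}
    (hw : star w ⬝ᵥ w = 1) :
    trace (vecMulVec w (star w)) = 1 := by
  rw [trace_vecMulVec, dotProduct_comm, hw]

lemma trace_mul_vecMulVec_star_of_mulVec_eq_smul {A : Matrix n n 𝕜} {w : n → 𝕜} {μ : 𝕜}
    (hw : star w ⬝ᵥ w = 1) (h : A *ᵥ w = μ • w) :
    trace (A * vecMulVec w (star w)) = μ := by
  rw [mul_vecMulVec, trace_vecMulVec, h, dotProduct_comm, dotProduct_smul, hw, smul_eq_mul,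
    mul_one]

lemma dotProduct_vecMulVec_star_mulVec (x w : n → 𝕜) :
    star x ⬝ᵥ (vecMulVec w (star w) *ᵥ x) = (star x ⬝ᵥ w) * (star w ⬝ᵥ x) := by
  rw [vecMulVec_mulVec, op_smul_eq_smul, dotProduct_smul, smul_eq_mul, mul_comm]

lemma posSemidef_smul_vecMulVec_add_smul_vecMulVec {a b : ℝ} (ha : 0 ≤ a) (hb : 0 ≤ b)
    (u w : n → 𝕜) :
    (a • vecMulVec u (star u) + b • vecMulVec w (star w)).PosSemidef :=
  ((posSemidef_vecMulVec_self_star u).smul ha).add ((posSemidef_vecMulVec_self_star w).smul hb)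

end Matrix

theorem stmt1_general {N : ℕ} (Ω : Matrix (Fin N) (Fin N) ℂ) (Ψ : Fin N → ℂ) (ε : ℝ)
    (hΨunit : dotProduct (star Ψ) Ψ = 1)
    (hfix : Ω.mulVec Ψ = Ψ)
    (hε0 : 0 ≤ ε) (hε1 : ε ≤ 1)
    (hattained : ∃ v : Fin N → ℂ, v ≠ 0 ∧ dotProduct (star Ψ) v = 0 ∧
      Ω.mulVec v = ((‖Ω - Matrix.vecMulVec Ψ (star Ψ)‖ : ℝ) : ℂ) • v) :
    ∃ ρ : Matrix (Fin N) (Fin N) ℂ, ρ.PosSemidef ∧ ρ.trace = 1 ∧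
      (dotProduct (star Ψ) (ρ.mulVec Ψ)).re = 1 - ε ∧
      ((Ω * ρ).trace).re = 1 - (1 - ‖Ω - Matrix.vecMulVec Ψ (star Ψ)‖) * ε := by
  set β := ‖Ω - vecMulVec Ψ (star Ψ)‖
  obtain ⟨v, hv, hvΨ, hvβ⟩ := hattained
  obtain ⟨s, hu⟩ := exists_smul_dotProduct_star_self_eq_one hv
  set u := s • v
  have huΨ : star Ψ ⬝ᵥ u = 0 := by rw [dotProduct_smul, hvΨ, smul_zero]
  have huβ : Ω *ᵥ u = (β : ℂ) • u := by rw [mulVec_smul, hvβ, smul_comm]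
  have hΨ1 : Ω *ᵥ Ψ = (1 : ℂ) • Ψ := by rw [one_smul, hfix]
  refine ⟨(1 - ε) • vecMulVec Ψ (star Ψ) + ε • vecMulVec u (star u),
    posSemidef_smul_vecMulVec_add_smul_vecMulVec (by linarith) hε0 Ψ u, ?_, ?_, ?_⟩
  · rw [trace_add, trace_smul, trace_smul,
      trace_vecMulVec_star_of_dotProduct_star_self_eq_one hΨunit,
      trace_vecMulVec_star_of_dotProduct_star_self_eq_one hu, ← add_smul, sub_add_cancel,
      one_smul]
  · rw [add_mulVec, smul_mulVec, smul_mulVec, dotProduct_add, dotProduct_smul, dotProduct_smul,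
      dotProduct_vecMulVec_star_mulVec, dotProduct_vecMulVec_star_mulVec, hΨunit, huΨ]
    simp
  · rw [mul_add, Matrix.mul_smul, Matrix.mul_smul, trace_add, trace_smul, trace_smul,
      trace_mul_vecMulVec_star_of_mulVec_eq_smul hΨunit hΨ1,
      trace_mul_vecMulVec_star_of_mulVec_eq_smul hu huβ]
    simp only [Complex.real_smul, Complex.ofReal_sub, Complex.ofReal_one, mul_one, Complex.add_re,
      Complex.sub_re, Complex.one_re, Complex.ofReal_re, Complex.mul_re, Complex.ofReal_im,
      mul_zero, sub_zero]
    ring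

/-- Tightness of the verification bound: if the second largest eigenvalue
`β = ‖Ω − |Ψ⟩⟨Ψ|‖` is attained by an eigenvector orthogonal to `Ψ`, then for every
`ε ∈ [0,1]` there is a density operator `ρ` with `⟨Ψ|ρ|Ψ⟩ = 1 − ε` and
`tr(Ωρ) = 1 − (1 − β)ε`. -/
theorem stmt1 {N : ℕ} (hN : 2 ≤ N) (Ω : Matrix (Fin N) (Fin N) ℂ) (Ψ : Fin N → ℂ) (ε : ℝ)
    (hΩherm : Ω.IsHermitian) (hΩpos : Ω.PosSemidef) (hΩle : (1 - Ω).PosSemidef)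
    (hΨunit : dotProduct (star Ψ) Ψ = 1)
    (hfix : Ω.mulVec Ψ = Ψ)
    (hε0 : 0 ≤ ε) (hε1 : ε ≤ 1)
    (hattained : ∃ v : Fin N → ℂ, v ≠ 0 ∧ dotProduct (star Ψ) v = 0 ∧
      Ω.mulVec v = ((‖Ω - Matrix.vecMulVec Ψ (star Ψ)‖ : ℝ) : ℂ) • v) :
    ∃ ρ : Matrix (Fin N) (Fin N) ℂ, ρ.PosSemidef ∧ ρ.trace = 1 ∧
      (dotProduct (star Ψ) (ρ.mulVec Ψ)).re = 1 - ε ∧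
      ((Ω * ρ).trace).re = 1 - (1 - ‖Ω - Matrix.vecMulVec Ψ (star Ψ)‖) * ε :=
  stmt1_general Ω Ψ ε hΨunit hfix hε0 hε1 hattained
end

section
/- With the notation of the previous statement, define P₀ = ∑_{i: s_i>0} |a_i⟩⟨a_i| ⊗ |B_i⟩⟨B_i| and P₁ = ∑_{i∈Z_d} |ã_i⟩⟨ã_i| ⊗ |B̃_i⟩⟨B̃_i|. Then P₀ and P₁ are orthogonal projectors, P₀|Ψ⟩ = |Ψ⟩, P₁|Ψ⟩ = |Ψ⟩, and tr(P₀P₁) = 1. -/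
/-!
Both `P₀` and `P₁` are sums of rank-one projectors `|w⟩⟨w|` over orthonormal families: the
`a_i ⊗ B_i`, and the `ã_k ⊗ B̃_k`, since the `ã_k` are orthonormal and every `B̃_k` has squared
norm `∑ s_j² = 1`. Such a sum is a Hermitian idempotent fixing every vector of the span of the
family, and `Ψ` lies in both spans: `Ψ = ∑ s_i a_i ⊗ B_i`, and by Fourier inversion
`∑_k ã_k ⊗ B̃_k = √d Ψ`. Finally the phases cancel in `⟨ã_k ⊗ B̃_k, a_i ⊗ B_i⟩ = s_i / √d`, so
`tr(P₀P₁) = ∑_{i,k} s_i² / d = 1`.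
-/

open Matrix

/-- The tensor product of two vectors. -/
def tensVec {d : ℕ} {ι : Type*} (u : Fin d → ℂ) (v : ι → ℂ) : Fin d × ι → ℂ :=
  fun p => u p.1 * v p.2

section Projector
variable {R n κ : Type*} [CommSemiring R] [StarRing R] [Fintype n] [DecidableEq κ]

omit [Fintype n] [DecidableEq κ] in
theorem isHermitian_sum_vecMulVec_star (T : Finset κ) (w : κ → n → R) :
    (∑ i ∈ T, vecMulVec (w i) (star (w i))).IsHermitian := by
  simp [IsHermitian, conjTranspose_sum]

omit [DecidableEq κ] in
theorem trace_sum_vecMulVec_star_mul_sum_vecMulVec_star {κ' : Type*} (T : Finset κ)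
    (T' : Finset κ') (v : κ → n → R) (u : κ' → n → R) :
    ((∑ i ∈ T, vecMulVec (v i) (star (v i))) * ∑ k ∈ T', vecMulVec (u k) (star (u k))).trace =
      ∑ i ∈ T, ∑ k ∈ T', (star (v i) ⬝ᵥ u k) * (star (u k) ⬝ᵥ v i) := by
  simp [Finset.sum_mul_sum, trace_sum, vecMulVec_mul_vecMulVec, dotProduct_comm (v _)]

variable {w : κ → n → R} (hw : ∀ i j, star (w i) ⬝ᵥ w j = if i = j then 1 else 0)
include hw

theorem star_dotProduct_sum_smul [Fintype κ] (i : κ) (g : κ → R) :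
    star (w i) ⬝ᵥ ∑ j, g j • w j = g i := by
  simp [dotProduct_sum, dotProduct_smul, hw]

theorem star_sum_smul_dotProduct [Fintype κ] (f : κ → R) (i : κ) :
    star (∑ j, f j • w j) ⬝ᵥ w i = star (f i) := by
  rw [star_dotProduct, star_dotProduct_sum_smul hw]

theorem star_sum_smul_dotProduct_sum_smul [Fintype κ] (f g : κ → R) :
    star (∑ i, f i • w i) ⬝ᵥ ∑ j, g j • w j = ∑ i, star (f i) * g i := by
  simp only [dotProduct_sum, dotProduct_smul, star_sum_smul_dotProduct hw, smul_eq_mul,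
    mul_comm]

theorem sum_vecMulVec_star_mul_self (T : Finset κ) :
    (∑ i ∈ T, vecMulVec (w i) (star (w i))) * ∑ i ∈ T, vecMulVec (w i) (star (w i)) =
      ∑ i ∈ T, vecMulVec (w i) (star (w i)) := by
  simp [Finset.sum_mul_sum, vecMulVec_mul_vecMulVec, hw, apply_ite (vecMulVec _)]

theorem sum_vecMulVec_star_mulVec_sum_smul (T : Finset κ) (f : κ → R) :
    (∑ i ∈ T, vecMulVec (w i) (star (w i))) *ᵥ ∑ i ∈ T, f i • w i =
      ∑ i ∈ T, f i • w i := by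
  simp [sum_mulVec, mulVec_sum, vecMulVec_mulVec, hw]

end Projector

theorem Complex.star_ofReal (r : ℝ) : star (r : ℂ) = r :=
  Complex.conj_ofReal r

theorem ofReal_sqrt_natCast_inv_mul_self (d : ℕ) :
    ((Real.sqrt d : ℂ))⁻¹ * ((Real.sqrt d : ℂ))⁻¹ = (d : ℂ)⁻¹ := by
  rw [← mul_inv, ← Complex.ofReal_mul, Real.mul_self_sqrt d.cast_nonneg, Complex.ofReal_natCast]

theorem IsPrimitiveRoot.star_eq_inv {ω : ℂ} {d : ℕ} (hω : IsPrimitiveRoot ω d)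
    (hd : d ≠ 0) : star ω = ω⁻¹ :=
  (Complex.inv_eq_conj (hω.norm'_eq_one hd)).symm

theorem IsPrimitiveRoot.star_pow_mul_pow {ω : ℂ} {d : ℕ} (hω : IsPrimitiveRoot ω d)
    (hd : d ≠ 0) (m : ℕ) : star ω ^ m * ω ^ m = 1 := by
  rw [← mul_pow, hω.star_eq_inv hd, inv_mul_cancel₀ (hω.ne_zero hd), one_pow]

theorem IsPrimitiveRoot.sum_star_pow_mul_pow {ω : ℂ} {d : ℕ} (hω : IsPrimitiveRoot ω d)
    (i k : Fin d) :
    ∑ j : Fin d, star ω ^ ((i : ℕ) * j) * ω ^ ((k : ℕ) * j) = if i = k then (d : ℂ) else 0 := by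
  have hd : d ≠ 0 := i.pos.ne'
  have hω0 : ω ≠ 0 := hω.ne_zero hd
  set ζ := ω ^ (k : ℕ) / ω ^ (i : ℕ) with hζ
  have hterm (j : ℕ) : star ω ^ ((i : ℕ) * j) * ω ^ ((k : ℕ) * j) = ζ ^ j := by
    rw [hω.star_eq_inv hd, hζ, div_pow, ← pow_mul, ← pow_mul, inv_pow, div_eq_mul_inv,
      mul_comm]
  simp only [hterm]
  rw [Fin.sum_univ_eq_sum_range (ζ ^ ·)]
  split_ifs with hik
  · simp [hζ, hik, hω0]
  · have hζ1 : ζ ≠ 1 := fun h => hik <| Fin.ext <|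
      hω.pow_inj i.isLt k.isLt ((div_eq_one_iff_eq (pow_ne_zero _ hω0)).1 h).symm
    have hζd : ζ ^ d = 1 := by
      rw [hζ, div_pow, ← pow_mul, ← pow_mul, mul_comm, pow_mul, hω.pow_eq_one, mul_comm,
        pow_mul, hω.pow_eq_one, one_pow, one_pow, div_one]
    rw [geom_sum_eq hζ1, hζd, sub_self, zero_div]

theorem IsPrimitiveRoot.sum_tensVec_fourier {ω : ℂ} {d : ℕ} {ι : Type*}
    (hω : IsPrimitiveRoot ω d) (f : Fin d → Fin d → ℂ) (g : Fin d → ι → ℂ) :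
    ∑ k : Fin d, tensVec (∑ j : Fin d, ω ^ ((k : ℕ) * j) • f j)
        (∑ l : Fin d, star ω ^ ((k : ℕ) * l) • g l) =
      (d : ℂ) • ∑ j, tensVec (f j) (g j) := by
  funext p
  calc (∑ k : Fin d, tensVec (∑ j : Fin d, ω ^ ((k : ℕ) * j) • f j)
          (∑ l : Fin d, star ω ^ ((k : ℕ) * l) • g l)) p
      = ∑ k : Fin d, ∑ j : Fin d, ∑ l : Fin d,
          star ω ^ ((l : ℕ) * k) * ω ^ ((j : ℕ) * k) * (f j p.1 * g l p.2) := by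
        simp only [tensVec, Finset.sum_apply, Pi.smul_apply, smul_eq_mul, Finset.sum_mul_sum]
        refine Finset.sum_congr rfl fun k _ => Finset.sum_congr rfl fun j _ =>
          Finset.sum_congr rfl fun l _ => ?_
        rw [Nat.mul_comm l, Nat.mul_comm j]
        ring
    _ = ∑ j : Fin d, ∑ l : Fin d,
          (∑ k : Fin d, star ω ^ ((l : ℕ) * k) * ω ^ ((j : ℕ) * k)) *
            (f j p.1 * g l p.2) := by
        simp only [Finset.sum_mul]
        rw [Finset.sum_comm]
        exact Finset.sum_congr rfl fun j _ => Finset.sum_comm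
    _ = ((d : ℂ) • ∑ j, tensVec (f j) (g j)) p := by
        simp only [hω.sum_star_pow_mul_pow, ite_mul, zero_mul, Finset.sum_ite_eq',
          Finset.mem_univ, if_true, Pi.smul_apply, Finset.sum_apply, smul_eq_mul,
          Finset.mul_sum, tensVec]

theorem star_tensVec_dotProduct_tensVec {d : ℕ} {ι : Type*} [Fintype ι] (p p' : Fin d → ℂ)
    (q q' : ι → ℂ) :
    star (tensVec p q) ⬝ᵥ tensVec p' q' = (star p ⬝ᵥ p') * (star q ⬝ᵥ q') := by
  simp only [dotProduct, tensVec, Pi.star_apply, star_mul', Fintype.sum_prod_type,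
    Finset.sum_mul_sum, mul_mul_mul_comm]

theorem tensVec_orthonormal {d : ℕ} {ι κ : Type*} [Fintype ι] [DecidableEq κ]
    {p : κ → Fin d → ℂ} {q : κ → ι → ℂ}
    (hp : ∀ i j, star (p i) ⬝ᵥ p j = if i = j then 1 else 0)
    (hq : ∀ i, star (q i) ⬝ᵥ q i = 1) (i j : κ) :
    star (tensVec (p i) (q i)) ⬝ᵥ tensVec (p j) (q j) = if i = j then 1 else 0 := by
  rw [star_tensVec_dotProduct_tensVec, hp]
  split_ifs with h
  · rw [h, hq, one_mul]
  · rw [zero_mul]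

/-- The Fourier basis `ã_k` with respect to `a`. -/
noncomputable def fourierVec {n : Type*} {d : ℕ} (ω : ℂ) (a : Fin d → n → ℂ) (k : Fin d) :
    n → ℂ :=
  ((Real.sqrt d : ℂ))⁻¹ • ∑ j : Fin d, ω ^ ((k : ℕ) * (j : ℕ)) • a j

/-- The paper's `B̃_k = ∑_j ω^{-kj} s_j B_j`, with `ω⁻¹ = star ω`. -/
def twistedVec {ι : Type*} {d : ℕ} (ω : ℂ) (s : Fin d → ℝ) (B : Fin d → ι → ℂ)
    (k : Fin d) : ι → ℂ :=
  ∑ j : Fin d, (star ω ^ ((k : ℕ) * (j : ℕ)) * s j) • B j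

section Fourier
variable {n ι : Type*} [Fintype n] [Fintype ι] {d : ℕ} {ω : ℂ} (hω : IsPrimitiveRoot ω d)
include hω

theorem IsPrimitiveRoot.star_fourierVec_dotProduct_fourierVec {a : Fin d → n → ℂ}
    (ha : ∀ i j, star (a i) ⬝ᵥ a j = if i = j then 1 else 0) (i k : Fin d) :
    star (fourierVec ω a i) ⬝ᵥ fourierVec ω a k = if i = k then 1 else 0 := by
  have hd : (d : ℂ) ≠ 0 := Nat.cast_ne_zero.2 i.pos.ne'
  rw [fourierVec, fourierVec, star_smul, smul_dotProduct, dotProduct_smul,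
    star_sum_smul_dotProduct_sum_smul ha]
  simp only [star_pow, hω.sum_star_pow_mul_pow, smul_eq_mul, ← mul_assoc, star_inv₀,
    Complex.star_ofReal, ofReal_sqrt_natCast_inv_mul_self]
  split_ifs
  · exact inv_mul_cancel₀ hd
  · exact mul_zero _

theorem IsPrimitiveRoot.star_twistedVec_dotProduct_twistedVec (s : Fin d → ℝ)
    {B : Fin d → ι → ℂ}
    (hB : ∀ i j, star (B i) ⬝ᵥ B j = if i = j then 1 else 0) (k : Fin d) :
    star (twistedVec ω s B k) ⬝ᵥ twistedVec ω s B k = ∑ j, (s j : ℂ) ^ 2 := by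
  rw [twistedVec, star_sum_smul_dotProduct_sum_smul hB]
  refine Finset.sum_congr rfl fun j _ => ?_
  rw [star_mul', star_pow, star_star, Complex.star_ofReal]
  linear_combination (s j : ℂ) ^ 2 * hω.star_pow_mul_pow k.pos.ne' ((k : ℕ) * j)

theorem IsPrimitiveRoot.star_tensVec_fourierVec_twistedVec_dotProduct (s : Fin d → ℝ)
    {a : Fin d → Fin d → ℂ} {B : Fin d → ι → ℂ}
    (ha : ∀ i j, star (a i) ⬝ᵥ a j = if i = j then 1 else 0)
    (hB : ∀ i j, star (B i) ⬝ᵥ B j = if i = j then 1 else 0) (k i : Fin d) :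
    star (tensVec (fourierVec ω a k) (twistedVec ω s B k)) ⬝ᵥ tensVec (a i) (B i) =
      ((Real.sqrt d : ℂ))⁻¹ * s i := by
  rw [star_tensVec_dotProduct_tensVec, fourierVec, star_smul, smul_dotProduct,
    star_sum_smul_dotProduct ha, twistedVec, star_sum_smul_dotProduct hB]
  simp only [star_mul', star_pow, star_star, ← Complex.ofReal_inv, Complex.star_ofReal,
    smul_eq_mul]
  linear_combination
    ((Real.sqrt d)⁻¹ * s i : ℂ) * hω.star_pow_mul_pow k.pos.ne' ((k : ℕ) * i)

theorem IsPrimitiveRoot.sum_star_dotProduct_mul_star_dotProduct_tensVec (s : Fin d → ℝ)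
    {a : Fin d → Fin d → ℂ} {B : Fin d → ι → ℂ}
    (ha : ∀ i j, star (a i) ⬝ᵥ a j = if i = j then 1 else 0)
    (hB : ∀ i j, star (B i) ⬝ᵥ B j = if i = j then 1 else 0) (i : Fin d) :
    ∑ k, (star (tensVec (a i) (B i)) ⬝ᵥ tensVec (fourierVec ω a k) (twistedVec ω s B k)) *
        (star (tensVec (fourierVec ω a k) (twistedVec ω s B k)) ⬝ᵥ tensVec (a i) (B i)) =
      (s i : ℂ) ^ 2 := by
  simp only [star_dotProduct (tensVec (a i) (B i)),
    hω.star_tensVec_fourierVec_twistedVec_dotProduct s ha hB, star_mul', star_inv₀,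
    Complex.star_ofReal, Finset.sum_const, Finset.card_univ, Fintype.card_fin, nsmul_eq_mul]
  rw [mul_mul_mul_comm, ofReal_sqrt_natCast_inv_mul_self, ← mul_assoc,
    mul_inv_cancel₀ (Nat.cast_ne_zero.2 i.pos.ne'), one_mul, sq]

omit [Fintype ι] in
theorem IsPrimitiveRoot.sum_tensVec_fourierVec_twistedVec (s : Fin d → ℝ)
    (a : Fin d → Fin d → ℂ) (B : Fin d → ι → ℂ) :
    ∑ k, tensVec (fourierVec ω a k) (twistedVec ω s B k) =
      (Real.sqrt d : ℂ) • ∑ j, (s j : ℂ) • tensVec (a j) (B j) := by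
  calc ∑ k, tensVec (fourierVec ω a k) (twistedVec ω s B k)
      = ((Real.sqrt d : ℂ))⁻¹ • ∑ k : Fin d, tensVec (∑ j : Fin d, ω ^ ((k : ℕ) * j) • a j)
          (∑ l : Fin d, star ω ^ ((k : ℕ) * l) • ((s l : ℂ) • B l)) := by
        rw [Finset.smul_sum]
        refine Finset.sum_congr rfl fun k _ => ?_
        ext p
        simp only [fourierVec, twistedVec, tensVec, smul_smul, Pi.smul_apply, smul_eq_mul]
        ring
    _ = (Real.sqrt d : ℂ) • ∑ j, (s j : ℂ) • tensVec (a j) (B j) := by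
        rw [hω.sum_tensVec_fourier, smul_smul, ← div_eq_inv_mul, ← Complex.ofReal_natCast,
          ← Complex.ofReal_div, Real.div_sqrt]
        congr 1
        refine Finset.sum_congr rfl fun j _ => ?_
        ext p
        simp only [tensVec, Pi.smul_apply, smul_eq_mul]
        ring

end Fourier

theorem stmt6_general (d : ℕ) (hd : 0 < d) {ι : Type*} [Fintype ι]
    (s : Fin d → ℝ) (a : Fin d → Fin d → ℂ) (B : Fin d → ι → ℂ)
    (hs0 : ∀ i, 0 ≤ s i) (hs1 : ∑ i, s i ^ 2 = 1)
    (haON : ∀ i j, dotProduct (star (a i)) (a j) = if i = j then 1 else 0)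
    (hBON : ∀ i j, dotProduct (star (B i)) (B j) = if i = j then 1 else 0)
    (Ψ : Fin d × ι → ℂ)
    (hΨ : Ψ = fun p => ∑ i : Fin d, (s i : ℂ) * a i p.1 * B i p.2)
    (ω : ℂ) (hω : ω = Complex.exp (2 * Real.pi * Complex.I / d))
    (at_ : Fin d → Fin d → ℂ)
    (hat : ∀ i, at_ i = ((Real.sqrt d : ℂ))⁻¹ • ∑ j : Fin d, ω ^ ((i : ℕ) * (j : ℕ)) • a j)
    (Bt : Fin d → ι → ℂ)
    (hBt : ∀ i, Bt i = fun y => ∑ j : Fin d, (star ω) ^ ((i : ℕ) * (j : ℕ)) * (s j : ℂ) * B j y)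
    (P₀ P₁ : Matrix (Fin d × ι) (Fin d × ι) ℂ)
    (hP₀ : P₀ = ∑ i ∈ Finset.univ.filter (fun i => 0 < s i),
      Matrix.vecMulVec (tensVec (a i) (B i)) (star (tensVec (a i) (B i))))
    (hP₁ : P₁ = ∑ i : Fin d,
      Matrix.vecMulVec (tensVec (at_ i) (Bt i)) (star (tensVec (at_ i) (Bt i)))) :
    P₀ * P₀ = P₀ ∧ P₀.IsHermitian ∧ P₁ * P₁ = P₁ ∧ P₁.IsHermitian ∧
    P₀.mulVec Ψ = Ψ ∧ P₁.mulVec Ψ = Ψ ∧ (P₀ * P₁).trace = 1 := by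
  have hprim : IsPrimitiveRoot ω d := hω ▸ Complex.isPrimitiveRoot_exp d hd.ne'
  obtain rfl : at_ = fourierVec ω a := funext hat
  obtain rfl : Bt = twistedVec ω s B := funext fun k => by
    ext y
    simp [hBt k, twistedVec, Finset.sum_apply]
  have hs1' : ∑ i, (s i : ℂ) ^ 2 = 1 := by exact_mod_cast hs1
  have hs_pos (i : Fin d) (h : s i ≠ 0) : 0 < s i := (hs0 i).lt_of_ne' h
  have hvON := tensVec_orthonormal (q := B) haON fun i => by rw [hBON, if_pos rfl]
  have huON := tensVec_orthonormal (q := twistedVec ω s B)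
    (hprim.star_fourierVec_dotProduct_fourierVec haON)
    fun k => by rw [hprim.star_twistedVec_dotProduct_twistedVec s hBON, hs1']
  have hΨ' : Ψ = ∑ i, (s i : ℂ) • tensVec (a i) (B i) := by
    ext p
    simp [hΨ, tensVec, Finset.sum_apply, mul_assoc]
  have hΨv :
      Ψ = ∑ i ∈ Finset.univ.filter (fun i => 0 < s i), (s i : ℂ) • tensVec (a i) (B i) := by
    rw [Finset.sum_filter_of_ne fun i _ h => hs_pos i fun h' => h (by simp [h']), hΨ']
  have hΨu :
      Ψ = ∑ k, ((Real.sqrt d : ℂ))⁻¹ • tensVec (fourierVec ω a k) (twistedVec ω s B k) := by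
    rw [← Finset.smul_sum, hprim.sum_tensVec_fourierVec_twistedVec, smul_smul,
      inv_mul_cancel₀ (by simp [hd.ne']), one_smul, hΨ']
  subst hP₀ hP₁
  refine ⟨sum_vecMulVec_star_mul_self hvON _, isHermitian_sum_vecMulVec_star _ _,
    sum_vecMulVec_star_mul_self huON _, isHermitian_sum_vecMulVec_star _ _, ?_, ?_, ?_⟩
  · rw [hΨv]; exact sum_vecMulVec_star_mulVec_sum_smul hvON _ _
  · rw [hΨu]; exact sum_vecMulVec_star_mulVec_sum_smul huON _ _
  · rw [trace_sum_vecMulVec_star_mul_sum_vecMulVec_star, ← hs1',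
      ← Finset.sum_filter_of_ne (f := fun i => (s i : ℂ) ^ 2) fun i _ h =>
        hs_pos i fun h' => h (by simp [h'])]
    exact Finset.sum_congr rfl fun i _ =>
      hprim.sum_star_dotProduct_mul_star_dotProduct_tensVec s haON hBON i

/-- The two test projectors `P₀ = ∑_{s_i>0} |a_i⟩⟨a_i|⊗|B_i⟩⟨B_i|` and
`P₁ = ∑_i |ã_i⟩⟨ã_i|⊗|B̃_i⟩⟨B̃_i|` of the bipartite SD protocol are orthogonal
projectors fixing `|Ψ⟩`, and `tr(P₀P₁) = 1`. -/
theorem stmt6 (d : ℕ) (hd : 0 < d) {ι : Type*} [Fintype ι] [DecidableEq ι]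
    (s : Fin d → ℝ) (a : Fin d → Fin d → ℂ) (B : Fin d → ι → ℂ)
    (hs0 : ∀ i, 0 ≤ s i) (hs1 : ∑ i, s i ^ 2 = 1)
    (haON : ∀ i j, dotProduct (star (a i)) (a j) = if i = j then 1 else 0)
    (hBON : ∀ i j, dotProduct (star (B i)) (B j) = if i = j then 1 else 0)
    (Ψ : Fin d × ι → ℂ)
    (hΨ : Ψ = fun p => ∑ i : Fin d, (s i : ℂ) * a i p.1 * B i p.2)
    (ω : ℂ) (hω : ω = Complex.exp (2 * Real.pi * Complex.I / d))
    (at_ : Fin d → Fin d → ℂ)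
    (hat : ∀ i, at_ i = ((Real.sqrt d : ℂ))⁻¹ • ∑ j : Fin d, ω ^ ((i : ℕ) * (j : ℕ)) • a j)
    (Bt : Fin d → ι → ℂ)
    (hBt : ∀ i, Bt i = fun y => ∑ j : Fin d, (star ω) ^ ((i : ℕ) * (j : ℕ)) * (s j : ℂ) * B j y)
    (P₀ P₁ : Matrix (Fin d × ι) (Fin d × ι) ℂ)
    (hP₀ : P₀ = ∑ i ∈ Finset.univ.filter (fun i => 0 < s i),
      Matrix.vecMulVec (tensVec (a i) (B i)) (star (tensVec (a i) (B i))))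
    (hP₁ : P₁ = ∑ i : Fin d,
      Matrix.vecMulVec (tensVec (at_ i) (Bt i)) (star (tensVec (at_ i) (Bt i)))) :
    P₀ * P₀ = P₀ ∧ P₀.IsHermitian ∧ P₁ * P₁ = P₁ ∧ P₁.IsHermitian ∧
    P₀.mulVec Ψ = Ψ ∧ P₁.mulVec Ψ = Ψ ∧ (P₀ * P₁).trace = 1 :=
  stmt6_general d hd s a B hs0 hs1 haON hBON Ψ hΨ ω hω at_ hat Bt hBt P₀ P₁ hP₀ hP₁
end
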